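/- arXiv:math-ph/0207014 — 3 statements merged into one kernel-verified Lean document; each statement's English description precedes it below -/
import Mathlib

section
/- If s : G → S ∪ {e} satisfies s(gh) = s(g) for all g ∈ G and h ∈ S ∪ {e}, and ad(h⁻¹)S ⊆ S for all h ∈ S, then the flow φ(g) = g s(g) of the associated discrete vector field is differentiable. Likewise, if s satisfies s(gh) = h⁻¹ s(g) h for all g ∈ G, h ∈ S, the flow is differentiable. -/
/-- A map `φ : G → G` is differentiable w.r.t. the group lattice `(G,S)` iff
`g⁻¹ * g' ∈ S → (φ g)⁻¹ * φ g' ∈ S ∪ {e}`. -/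
def IsDifferentiable {G : Type*} [Group G] [DecidableEq G] (S : Finset G)
    (φ : G → G) : Prop :=
  ∀ g g' : G, g⁻¹ * g' ∈ S → (φ g)⁻¹ * φ g' ∈ insert (1 : G) S

/-- If `s : G → S ∪ {e}` satisfies `s(gh) = s(g)` for all `h ∈ S ∪ {e}` and
`ad(h⁻¹) S ⊆ S` for all `h ∈ S`, then the flow `φ(g) = g s(g)` is differentiable;
likewise if `s(gh) = h⁻¹ s(g) h` for all `h ∈ S`. -/
theorem flow_differentiable_of_invariant_or_equivariant
    {G : Type*} [Group G] [DecidableEq G] (S : Finset G) (hS : (1 : G) ∉ S)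
    (s : G → G) (hs : ∀ g, s g ∈ insert (1 : G) S) :
    ((∀ g : G, ∀ h ∈ insert (1 : G) S, s (g * h) = s g) →
      (∀ h ∈ S, ∀ x ∈ S, h⁻¹ * x * h ∈ S) →
      IsDifferentiable S (fun g => g * s g)) ∧
    ((∀ g : G, ∀ h ∈ S, s (g * h) = h⁻¹ * s g * h) →
      IsDifferentiable S (fun g => g * s g)) := by
  constructor
  · intro hinv had g g' hgg'
    have hg' : g' = g * (g⁻¹ * g') := by group
    have hsg' : s g' = s g := by
      rw [hg']; exact hinv g _ (Finset.mem_insert_of_mem hgg')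
    simp only
    have key : (g * s g)⁻¹ * (g' * s g') = (s g)⁻¹ * (g⁻¹ * g') * s g := by
      rw [hsg']; group
    rw [key]
    rcases Finset.mem_insert.mp (hs g) with h1 | hmem
    · rw [h1]; simpa using Finset.mem_insert_of_mem hgg'
    · exact Finset.mem_insert_of_mem (had _ hmem _ hgg')
  · intro heq g g' hgg'
    have hg' : g' = g * (g⁻¹ * g') := by group
    have hsg' : s g' = (g⁻¹ * g')⁻¹ * s g * (g⁻¹ * g') := by
      conv_lhs => rw [hg']
      exact heq g _ hgg'
    simp only
    have key : (g * s g)⁻¹ * (g' * s g') = g⁻¹ * g' := by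
      rw [hsg']; group
    rw [key]
    exact Finset.mem_insert_of_mem hgg'
end

section
/- Discrete vector field condition on components: a vector field with components X^h : G → ℂ (h ∈ S) satisfies X(ff') = (Xf)f' + f(Xf') + (Xf)(Xf') for all functions f, f', where (Xf)(g) = Σ_{h∈S} X^h(g)(f(gh) − f(g)), if and only if X^h X^{h'} = δ^{h,h'} X^h for all h, h' ∈ S, i.e. at every g ∈ G at most one X^h(g) is nonzero and then equals 1. -/
/-- A vector field with components `c h : G → ℂ` (`h ∈ S`), acting on functions by
`(X f)(g) = ∑_{h ∈ S} c h g * (f (g h) - f g)`, satisfies the modified Leibniz rule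
`X(f f') = (X f) f' + f (X f') + (X f)(X f')` (i.e. is a discrete vector field) iff
`c h * c h' = δ_{h,h'} c h` for all `h, h' ∈ S`. -/
theorem discrete_vectorField_iff_components_idempotent_orthogonal
    {G : Type*} [Group G] [DecidableEq G] (S : Finset G) (hS : (1 : G) ∉ S)
    (c : G → G → ℂ) :
    ((∀ f f' : G → ℂ, ∀ g : G,
        (∑ h ∈ S, c h g * ((f * f') (g * h) - (f * f') g)) =
          (∑ h ∈ S, c h g * (f (g * h) - f g)) * f' g
          + f g * (∑ h ∈ S, c h g * (f' (g * h) - f' g))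
          + (∑ h ∈ S, c h g * (f (g * h) - f g))
            * (∑ h ∈ S, c h g * (f' (g * h) - f' g))) ↔
      ∀ h ∈ S, ∀ h' ∈ S, ∀ g : G,
        c h g * c h' g = (if h = h' then 1 else 0) * c h g) := by
  constructor
  · intro H h0 hh0 h0' hh0' g
    have H' := H (fun x => if x = g * h0 then 1 else 0)
      (fun x => if x = g * h0' then 1 else 0) g
    have hg0 : g ≠ g * h0 := by
      intro e
      apply hS
      have : h0 = 1 := by
        have := mul_left_cancel (a := g) (b := (1 : G)) (c := h0) (by simpa using e)
        exact this.symm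
      rwa [← this]
    have hg0' : g ≠ g * h0' := by
      intro e
      apply hS
      have : h0' = 1 := by
        have := mul_left_cancel (a := g) (b := (1 : G)) (c := h0') (by simpa using e)
        exact this.symm
      rwa [← this]
    simp only [Pi.mul_apply, mul_left_cancel_iff, if_neg hg0, if_neg hg0',
      mul_zero, zero_mul, sub_zero, mul_ite, mul_one] at H'
    rw [Finset.sum_ite_eq' S h0' (fun x => if x = h0 then c x g else 0), if_pos hh0',
      Finset.sum_ite_eq' S h0 (fun x => c x g), if_pos hh0,
      Finset.sum_ite_eq' S h0' (fun x => c x g), if_pos hh0'] at H'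
    by_cases e : h0 = h0'
    · subst e
      simp only [if_true, eq_self_iff_true, one_mul, zero_add] at H' ⊢
      linear_combination -H'
    · simp only [if_neg (Ne.symm e), if_neg e, zero_add, zero_mul] at H' ⊢
      linear_combination -H'
  · intro H f f' g
    have key : (∑ h ∈ S, c h g * (f (g * h) - f g)) * (∑ h ∈ S, c h g * (f' (g * h) - f' g))
        = ∑ h ∈ S, c h g * (f (g * h) - f g) * (f' (g * h) - f' g) := by
      rw [Finset.sum_mul_sum]
      refine Finset.sum_congr rfl fun h hh => ?_
      have step : ∀ h' ∈ S, (c h g * (f (g * h) - f g)) * (c h' g * (f' (g * h') - f' g))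
          = if h = h' then c h g * (f (g * h) - f g) * (f' (g * h') - f' g) else 0 := by
        intro h' hh'
        have hcc := H h hh h' hh' g
        by_cases e : h = h'
        · simp only [if_pos e]
          simp only [if_pos e, one_mul] at hcc
          subst e
          linear_combination (f (g * h) - f g) * (f' (g * h) - f' g) * hcc
        · simp only [if_neg e]
          simp only [if_neg e, zero_mul] at hcc
          linear_combination (f (g * h) - f g) * (f' (g * h') - f' g) * hcc
      rw [Finset.sum_congr rfl step, Finset.sum_ite_eq S h
        (fun h' => c h g * (f (g * h) - f g) * (f' (g * h') - f' g)), if_pos hh]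
    rw [key, Finset.sum_mul, Finset.mul_sum, ← Finset.sum_add_distrib, ← Finset.sum_add_distrib]
    refine Finset.sum_congr rfl fun h _ => ?_
    simp only [Pi.mul_apply]
    ring
end

section
/- Let G be a group and S ⊆ G \ {e} finite with ad(h)S ⊆ S for all h ∈ S (bicovariant group lattice). For h₁, h₂ ∈ S with h₁h₂ ∉ S ∪ {e}, define the chain recursively by h_{k+1} = ad(h_k⁻¹) h_{k-1}. Then each h_k ∈ S, h_k h_{k+1} = h₁h₂ for all k, and the chain is periodic: there exists r ≥ 1 with h_{k+r} = h_k for all k. -/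
lemma inv_conj_mem {G : Type*} [Group G] [DecidableEq G] (S : Finset G)
    (hbc : ∀ h ∈ S, ∀ x ∈ S, h * x * h⁻¹ ∈ S) :
    ∀ h ∈ S, ∀ x ∈ S, h⁻¹ * x * h ∈ S := by
  intro h hh x hx
  have himg : S.image (fun y => h * y * h⁻¹) = S := by
    apply Finset.eq_of_subset_of_card_le
    · intro z hz
      simp only [Finset.mem_image] at hz
      obtain ⟨y, hy, rfl⟩ := hz
      exact hbc h hh y hy
    · rw [Finset.card_image_of_injective]
      intro a b hab
      simpa using hab
  have : x ∈ S.image (fun y => h * y * h⁻¹) := by rw [himg]; exact hx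
  simp only [Finset.mem_image] at this
  obtain ⟨y, hy, hxy⟩ := this
  have : h⁻¹ * x * h = y := by rw [← hxy]; group
  rwa [this]

/-- On a bicovariant group lattice (`ad(h) S ⊆ S` for all `h ∈ S`), given
`h₁, h₂ ∈ S` with `h₁ h₂ ∉ S ∪ {e}`, the chain defined by `c 0 = h₁`, `c 1 = h₂`,
`c (k+2) = ad(c (k+1)⁻¹) (c k)` stays in `S`, satisfies `c k * c (k+1) = h₁ h₂`
for all `k`, and is periodic: there is `r ≥ 1` with `c (k + r) = c k` for all `k`. -/
theorem chain_in_S_product_constant_periodic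
    {G : Type*} [Group G] [DecidableEq G] (S : Finset G) (hS : (1 : G) ∉ S)
    (hbc : ∀ h ∈ S, ∀ x ∈ S, h * x * h⁻¹ ∈ S)
    (h₁ h₂ : G) (h1S : h₁ ∈ S) (h2S : h₂ ∈ S)
    (hne : h₁ * h₂ ∉ insert (1 : G) S)
    (c : ℕ → G) (hc0 : c 0 = h₁) (hc1 : c 1 = h₂)
    (hrec : ∀ k : ℕ, c (k + 2) = (c (k + 1))⁻¹ * c k * c (k + 1)) :
    (∀ k, c k ∈ S) ∧ (∀ k, c k * c (k + 1) = h₁ * h₂) ∧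
      ∃ r : ℕ, 1 ≤ r ∧ ∀ k, c (k + r) = c k := by
  -- membership
  have hmem2 : ∀ k, c k ∈ S ∧ c (k + 1) ∈ S := by
    intro k
    induction k with
    | zero => exact ⟨hc0 ▸ h1S, hc1 ▸ h2S⟩
    | succ n ih =>
      refine ⟨ih.2, ?_⟩
      rw [hrec n]
      exact inv_conj_mem S hbc _ ih.2 _ ih.1
  have hmem : ∀ k, c k ∈ S := fun k => (hmem2 k).1
  -- product constant
  have hprod : ∀ k, c k * c (k + 1) = h₁ * h₂ := by
    intro k
    induction k with
    | zero => rw [hc0, hc1]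
    | succ n ih =>
      rw [hrec n, ← ih]; group
  refine ⟨hmem, hprod, ?_⟩
  -- back-step: c k determined by c (k+1), c (k+2)
  have hback : ∀ k, c k = c (k + 1) * c (k + 2) * (c (k + 1))⁻¹ := by
    intro k; rw [hrec k]; group
  -- pairs
  set p : ℕ → G × G := fun k => (c k, c (k + 1)) with hp
  have hmaps : ∀ i ∈ Finset.range ((S ×ˢ S).card + 1), p i ∈ S ×ˢ S := by
    intro i _; exact Finset.mem_product.2 ⟨hmem i, hmem (i + 1)⟩
  obtain ⟨i, hi, j, hj, hij, hpij⟩ :=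
    Finset.exists_ne_map_eq_of_card_lt_of_maps_to (by simp) hmaps
  -- wlog i < j
  obtain ⟨i, j, hlt, hpij⟩ : ∃ i j, i < j ∧ p i = p j := by
    rcases lt_or_gt_of_ne hij with h | h
    · exact ⟨i, j, h, hpij⟩
    · exact ⟨j, i, h, hpij.symm⟩
  set r := j - i with hr
  have hjr : j = i + r := by omega
  have hr1 : 1 ≤ r := by omega
  -- downward: p i = p (i + r) → p 0 = p r
  have hdown : ∀ i, p i = p (i + r) → p 0 = p (0 + r) := by
    intro i
    induction i with
    | zero => exact fun h => h
    | succ n ih =>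
      intro h
      apply ih
      have h1 : c (n + 1) = c (n + 1 + r) := congrArg Prod.fst h
      have h2 : c (n + 2) = c (n + 1 + r + 1) := congrArg Prod.snd h
      have : c n = c (n + r) := by
        rw [hback n, hback (n + r), h1, show n + r + 1 = n + 1 + r by ring,
          show n + r + 2 = n + 1 + r + 1 by ring, ← h2]
      simp only [hp, Prod.mk.injEq]
      exact ⟨this, by rw [h1]; ring_nf⟩
  have h0r : p 0 = p (0 + r) := hdown i (by rw [← hjr]; exact hpij)
  -- forward: p k = p (k + r) for all k
  have hfwd : ∀ k, p k = p (k + r) := by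
    intro k
    induction k with
    | zero => exact h0r
    | succ n ih =>
      have h1 : c n = c (n + r) := congrArg Prod.fst ih
      have h2 : c (n + 1) = c (n + r + 1) := congrArg Prod.snd ih
      have h3 : c (n + 2) = c (n + r + 2) := by
        rw [hrec n, hrec (n + r), h1, h2]
      simp only [hp, Prod.mk.injEq]
      exact ⟨by rw [h2]; ring_nf, by rw [h3]; ring_nf⟩
  exact ⟨r, hr1, fun k => (congrArg Prod.fst (hfwd k)).symm⟩
end
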